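/- Let E be a full heap over A, where P is finite and A is of affine type. Then for every w in W and all proper ideals F, F' of E, the pair (F, F') is skew if and only if the pair (w · F, w · F') is skew. -/

import Mathlib

/-- Two vertices of the Dynkin diagram are adjacent if they are distinct
and the corresponding entry of the generalized Cartan matrix is nonzero. -/
def Adj {P : Type*} (A : P → P → ℤ) (p q : P) : Prop := p ≠ q ∧ A p q ≠ 0

/-- A generalized Cartan matrix with all entries in {2, 0, -1, -2}. -/
def IsGCM {P : Type*} (A : P → P → ℤ) : Prop :=
  (∀ p, A p p = 2) ∧ (∀ p q, p ≠ q → A p q ≤ 0) ∧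
  (∀ p q, (A p q = 0 ↔ A q p = 0)) ∧
  (∀ p q, A p q = 2 ∨ A p q = 0 ∨ A p q = -1 ∨ A p q = -2)

/-- An ideal (downward-closed subset) of a partially ordered set. -/
def IsIdeal {E : Type*} [PartialOrder E] (F : Set E) : Prop :=
  ∀ ⦃x : E⦄, x ∈ F → ∀ ⦃y : E⦄, y ≤ x → y ∈ F

/-- A proper ideal: an ideal meeting each fibre `eps ⁻¹ {p}` in a nonempty
proper subset. -/
def IsProperIdeal {P E : Type*} [PartialOrder E] (eps : E → P) (F : Set E) : Prop :=
  IsIdeal F ∧ ∀ p : P, (∃ a, eps a = p ∧ a ∈ F) ∧ (∃ a, eps a = p ∧ a ∉ F)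

/-- A full heap over the generalized Cartan matrix `A` with labelling map `eps`.
Local finiteness is expressed by the `LocallyFiniteOrder` instance. -/
structure IsFullHeap {P E : Type*} [PartialOrder E] [LocallyFiniteOrder E]
    (A : P → P → ℤ) (eps : E → P) : Prop where
  /-- elements with equal or adjacent labels are comparable -/
  comparable : ∀ a b : E, (eps a = eps b ∨ Adj A (eps a) (eps b)) → a ≤ b ∨ b ≤ a
  /-- the order is the reflexive-transitive closure of its restriction to
  pairs with equal or adjacent labels -/
  le_generated : ∀ a b : E, a ≤ b ↔
    Relation.ReflTransGen (fun x y : E => x ≤ y ∧ (eps x = eps y ∨ Adj A (eps x) (eps y))) a b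
  /-- each fibre is unbounded above in E -/
  unbounded_above : ∀ (p : P) (a : E), ∃ b, eps b = p ∧ ¬ b ≤ a
  /-- each fibre is unbounded below in E -/
  unbounded_below : ∀ (p : P) (a : E), ∃ b, eps b = p ∧ ¬ a ≤ b
  /-- covering elements with adjacent labels exist -/
  covers : ∀ p p' : P, Adj A p p' → ∀ a : E, eps a = p →
    ∃ b, eps b = p' ∧ (a ⋖ b ∨ b ⋖ a)
  /-- the defining condition on open intervals between consecutive elements
  of a fibre -/
  interval : ∀ a b : E, a < b → eps a = eps b →
    (∀ c, a < c → c < b → eps c ≠ eps a) →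
    (∑ c ∈ Finset.Ioo a b, A (eps a) (eps c)) = -2

/-- The character of a pair of proper ideals:
`chi(F, F')(p) = |(F' \ F) ∩ eps⁻¹(p)| - |(F \ F') ∩ eps⁻¹(p)|`. -/
noncomputable def chiFn {P E : Type*} (eps : E → P) (F F' : Set E) : P → ℤ :=
  fun p => (((F' \ F) ∩ eps ⁻¹' {p}).ncard : ℤ) - (((F \ F') ∩ eps ⁻¹' {p}).ncard : ℤ)

open Classical in
/-- The operator `S_p` on ideals: remove the (unique) element of label `p`
that can be removed, else add the (unique) element of label `p` that can be
added, else do nothing. -/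
noncomputable def Sact {P E : Type*} [PartialOrder E] (eps : E → P) (p : P) (I : Set E) :
    Set E :=
  if h : ∃ a, a ∈ I ∧ eps a = p ∧ IsIdeal (I \ {a}) then I \ {h.choose}
  else if h' : ∃ a, a ∉ I ∧ eps a = p ∧ IsIdeal (I ∪ {a}) then I ∪ {h'.choose}
  else I

/-- The defining relations of the Weyl group of a (doubly laced)
generalized Cartan matrix. -/
def weylRels {P : Type*} (A : P → P → ℤ) : Set (FreeGroup P) :=
  {r | (∃ p, r = FreeGroup.of p ^ 2) ∨
       (∃ p q, A p q = 0 ∧ r = (FreeGroup.of p * FreeGroup.of q) ^ 2) ∨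
       (∃ p q, A p q * A q p = 1 ∧ r = (FreeGroup.of p * FreeGroup.of q) ^ 3) ∨
       (∃ p q, A p q * A q p = 2 ∧ r = (FreeGroup.of p * FreeGroup.of q) ^ 4)}

/-- The Weyl group of a generalized Cartan matrix, as a presented group. -/
abbrev WeylGroup {P : Type*} (A : P → P → ℤ) := PresentedGroup (weylRels A)

/-- The reflection `s_p` in the reflection representation on `ℤ^P`:
`s_p(v) = v - (∑ q, a_{pq} v_q) e_p`. -/
def reflAct {P : Type*} [Fintype P] [DecidableEq P] (A : P → P → ℤ) (p : P) (v : P → ℤ) :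
    P → ℤ :=
  fun r => if r = p then v p - ∑ q, A p q * v q else v r

/-- `A` is of affine type: indecomposable, and `A δ = 0` for some positive
integer vector `δ`. -/
def IsAffine {P : Type*} [Fintype P] (A : P → P → ℤ) : Prop :=
  (∀ p q : P, Relation.ReflTransGen (Adj A) p q) ∧
  ∃ δ : P → ℤ, (∀ p, 0 < δ p) ∧ ∀ p, (∑ q, A p q * δ q) = 0

/-!
The character is `W`-equivariant, `χ(w • F, w • F') = w (χ(F, F'))`, and the set of real roots
is `W`-stable; it suffices to check equivariance on a generator `s_p`.

Fix `p` and let `a < b` be the consecutive elements of the `p`-fibre with `a ∈ F`, `b ∉ F`. Let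
`t_p(F)` be the sum of `a_{p, ε(x)}` over `x ∈ (a, b) ∩ F`. Since the whole interval `(a, b)`
has weight `-2` and all its elements of nonzero weight have labels adjacent to `p`, `t_p(F)`
equals `0`, `-2` or `-1` exactly when `s_p` removes `a`, adds `b`, or fixes `F`; that is,
`χ(F, s_p F) = -(t_p(F) + 1) e_p`. On the other hand `∑_q a_{pq} χ(F, F')_q = t_p(F') - t_p(F)`:
growing `F ∩ F'` to `F` one minimal element `x` at a time changes `t_p` by exactly `a_{p, ε(x)}`.
Since `χ` is a cocycle, these two facts combine to `χ(s_p F, s_p F') = s_p χ(F, F')`.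
-/

lemma ncard_sdiff_inter_sub_ncard_sdiff_inter {α : Type*} {S T U : Set α} (V : Set α)
    (hU : U.Finite) (hST : S \ T ⊆ U) (hTS : T \ S ⊆ U) :
    (((T \ S) ∩ V).ncard : ℤ) - ((S \ T) ∩ V).ncard = (T ∩ U ∩ V).ncard - (S ∩ U ∩ V).ncard := by
  have hT := Set.ncard_inter_add_ncard_sdiff_eq_ncard (T ∩ U ∩ V) S (hU.subset fun x hx => hx.1.2)
  have hS := Set.ncard_inter_add_ncard_sdiff_eq_ncard (S ∩ U ∩ V) T (hU.subset fun x hx => hx.1.2)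
  have eT : (T ∩ U ∩ V) \ S = (T \ S) ∩ V := by
    ext x; have := @hTS x; simp only [Set.mem_sdiff, Set.mem_inter_iff] at this ⊢; tauto
  have eS : (S ∩ U ∩ V) \ T = (S \ T) ∩ V := by
    ext x; have := @hST x; simp only [Set.mem_sdiff, Set.mem_inter_iff] at this ⊢; tauto
  have eST : T ∩ U ∩ V ∩ S = S ∩ U ∩ V ∩ T := by
    ext x; simp only [Set.mem_inter_iff]; tauto
  rw [eT] at hT
  rw [eS, ← eST] at hS
  omega

lemma sum_mul_ncard_inter_preimage {α ι : Type*} [Fintype ι] (f : ι → ℤ) (g : α → ι)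
    {s : Set α} (hs : s.Finite) :
    ∑ i, f i * ((s ∩ g ⁻¹' {i}).ncard : ℤ) = ∑ᶠ x ∈ s, f (g x) := by
  classical
  lift s to Finset α using hs
  rw [finsum_mem_coe_finset, ← Finset.sum_fiberwise s g (fun x => f (g x))]
  refine Finset.sum_congr rfl fun i _ => ?_
  have : (↑s ∩ g ⁻¹' {i} : Set α) = ↑(s.filter (fun x => g x = i)) := by
    ext x; simp
  rw [this, Set.ncard_coe_finset, Finset.sum_congr rfl fun x hx => by
    rw [(Finset.mem_filter.1 hx).2], Finset.sum_const, nsmul_eq_mul, mul_comm]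

lemma finsum_mem_le_of_nonpos {α M : Type*} [AddCommMonoid M] [PartialOrder M]
    [IsOrderedAddMonoid M] {s : Set α} {f : α → M} (hs : s.Finite) (hf : ∀ x ∈ s, f x ≤ 0)
    {y : α} (hy : y ∈ s) : ∑ᶠ x ∈ s, f x ≤ f y := by
  classical
  rw [finsum_mem_eq_finite_toFinset_sum f hs]
  simpa using Finset.sum_le_sum_of_subset_of_nonpos' (f := f) (s := {y})
    (by simpa using hy) fun x hx _ => hf x (by simpa using hx)

lemma exists_map_apply_eq_map_apply_iff {G Y ι : Type*} [Group G] (ρ : G →* Equiv.Perm Y)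
    (y : ι → Y) (w : G) (v : Y) :
    (∃ u i, ρ u (y i) = ρ w v) ↔ ∃ u i, ρ u (y i) = v := by
  constructor
  · rintro ⟨u, i, hu⟩
    exact ⟨w⁻¹ * u, i, by simp [hu]⟩
  · rintro ⟨u, i, hu⟩
    exact ⟨w * u, i, by rw [map_mul, Equiv.Perm.mul_apply, hu]⟩

lemma PresentedGroup.equivariant_of_forall_of {α X Y : Type*} {rels : Set (FreeGroup α)}
    (act : PresentedGroup rels →* Equiv.Perm X) (ρ : PresentedGroup rels →* Equiv.Perm Y)
    (f : X → X → Y)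
    (h : ∀ a x x', f (act (.of a) x) (act (.of a) x') = ρ (.of a) (f x x'))
    (w : PresentedGroup rels) (x x' : X) : f (act w x) (act w x') = ρ w (f x x') := by
  refine PresentedGroup.generated_by rels
    { carrier := {w | ∀ x x', f (act w x) (act w x') = ρ w (f x x')}
      mul_mem' := fun {w₁ w₂} h₁ h₂ x x' => ?_
      one_mem' := fun x x' => by simp
      inv_mem' := fun {w} hw x x' => ?_ } h w x x'
  · simp only [map_mul, Equiv.Perm.mul_apply]
    rw [h₁, h₂]
  · rw [map_inv, map_inv, Equiv.Perm.eq_inv_iff_eq, ← hw]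
    simp

lemma reflAct_eq_sub_single {P : Type*} [Fintype P] [DecidableEq P] (A : P → P → ℤ) (p : P)
    (v : P → ℤ) : reflAct A p v = v - Pi.single p (∑ q, A p q * v q) := by
  funext r
  by_cases h : r = p
  · subst h; simp [reflAct]
  · simp [reflAct, h]

lemma IsGCM.adj_symm {P : Type*} {A : P → P → ℤ} (hA : IsGCM A) {p q : P} (h : Adj A p q) :
    Adj A q p :=
  ⟨h.1.symm, fun h0 => h.2 ((hA.2.2.1 p q).2 h0)⟩

section Character

variable {P E : Type*} {eps : E → P}

lemma chiFn_self (F : Set E) : chiFn eps F F = 0 := by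
  funext q; simp [chiFn]

lemma chiFn_swap (F G : Set E) : chiFn eps G F = -chiFn eps F G := by
  funext q; simp [chiFn]

lemma ncard_singleton_inter_preimage [DecidableEq P] (a : E) (q : P) :
    (({a} ∩ eps ⁻¹' {q} : Set E).ncard : ℤ) = (Pi.single (eps a) 1 : P → ℤ) q := by
  by_cases h : eps a = q
  · subst h; simp
  · rw [Set.singleton_inter_eq_empty.2 (show a ∉ eps ⁻¹' {q} from h)]; simp [Ne.symm h]

lemma chiFn_sdiff_singleton [DecidableEq P] {F : Set E} {a : E} (ha : a ∈ F) :
    chiFn eps F (F \ {a}) = -Pi.single (eps a) 1 := by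
  funext q
  have h : F \ (F \ {a}) = {a} := by
    rw [Set.sdiff_sdiff_right_self, Set.inter_singleton_of_mem ha]
  simp [chiFn, h, ncard_singleton_inter_preimage]

lemma chiFn_insert [DecidableEq P] {F : Set E} {a : E} (ha : a ∉ F) :
    chiFn eps F (insert a F) = Pi.single (eps a) 1 := by
  funext q
  have h : insert a F \ F = {a} := by
    rw [Set.insert_sdiff_of_notMem _ ha, Set.sdiff_self, insert_empty_eq]
  simp [chiFn, h, Set.sdiff_eq_empty.2 (Set.subset_insert a F), ncard_singleton_inter_preimage]

lemma chiFn_add_chiFn {F G H : Set E} (hFG : (F \ G).Finite) (hGF : (G \ F).Finite)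
    (hGH : (G \ H).Finite) (hHG : (H \ G).Finite) :
    chiFn eps F G + chiFn eps G H = chiFn eps F H := by
  set U := (F \ G) ∪ (G \ F) ∪ (G \ H) ∪ (H \ G)
  have hU : U.Finite := ((hFG.union hGF).union hGH).union hHG
  have hFH : F \ H ⊆ U := fun x ⟨hF, hH⟩ => by
    by_cases hG : x ∈ G
    · exact Or.inl (Or.inr ⟨hG, hH⟩)
    · exact Or.inl (Or.inl (Or.inl ⟨hF, hG⟩))
  have hHF : H \ F ⊆ U := fun x ⟨hH, hF⟩ => by
    by_cases hG : x ∈ G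
    · exact Or.inl (Or.inl (Or.inr ⟨hG, hF⟩))
    · exact Or.inr ⟨hH, hG⟩
  funext q
  simp only [Pi.add_apply, chiFn]
  rw [ncard_sdiff_inter_sub_ncard_sdiff_inter _ hU (fun x hx => Or.inl (Or.inl (Or.inl hx)))
      (fun x hx => Or.inl (Or.inl (Or.inr hx))),
    ncard_sdiff_inter_sub_ncard_sdiff_inter _ hU (fun x hx => Or.inl (Or.inr hx))
      (fun x hx => Or.inr hx),
    ncard_sdiff_inter_sub_ncard_sdiff_inter _ hU hFH hHF]
  ring

lemma sum_mul_chiFn_eq_finsum [Fintype P] (f : P → ℤ) {F G : Set E} (hFG : (F \ G).Finite)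
    (hGF : (G \ F).Finite) :
    ∑ q, f q * chiFn eps F G q = ∑ᶠ x ∈ G \ F, f (eps x) - ∑ᶠ x ∈ F \ G, f (eps x) := by
  simp only [chiFn, mul_sub, Finset.sum_sub_distrib]
  rw [sum_mul_ncard_inter_preimage f eps hGF, sum_mul_ncard_inter_preimage f eps hFG]

end Character

namespace IsFullHeap

variable {P E : Type*} [PartialOrder E] [LocallyFiniteOrder E] {A : P → P → ℤ} {eps : E → P}

lemma eps_eq_or_adj_of_covBy (hE : IsFullHeap A eps) {a b : E} (hab : a ⋖ b) :
    eps a = eps b ∨ Adj A (eps a) (eps b) := by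
  have key : ∀ d, Relation.ReflTransGen
      (fun x y : E => x ≤ y ∧ (eps x = eps y ∨ Adj A (eps x) (eps y))) a d → d ≤ b →
      d = a ∨ eps a = eps d ∨ Adj A (eps a) (eps d) := by
    intro d had
    induction had with
    | refl => exact fun _ => Or.inl rfl
    | @tail c d hac hcd ih =>
      intro hdb
      by_cases hca : c = a
      · subst hca; exact Or.inr hcd.2
      -- as `a ⋖ b`, every point of the chain other than `a` equals `b`
      have hac' : a < c := lt_of_le_of_ne ((hE.le_generated a c).2 hac) (Ne.symm hca)
      have hcb : c = b := by
        by_contra hne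
        exact hab.2 hac' (lt_of_le_of_ne (hcd.1.trans hdb) hne)
      have hcd' : c = d := le_antisymm hcd.1 (hcb ▸ hdb)
      exact hcd' ▸ ih (hcd.1.trans hdb)
  rcases key b ((hE.le_generated a b).1 hab.le) le_rfl with h | h
  · exact absurd h hab.ne'
  · exact h

lemma lt_of_mem_of_notMem (hE : IsFullHeap A eps) {F : Set E} (hF : IsIdeal F) {x y : E}
    (hx : x ∈ F) (hy : y ∉ F) (hxy : eps x = eps y ∨ Adj A (eps x) (eps y)) : x < y := by
  rcases hE.comparable x y hxy with hle | hle
  · exact lt_of_le_of_ne hle (by rintro rfl; exact hy hx)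
  · exact absurd (hF hx hle) hy

lemma finsum_Ioo_eq_neg_two (hE : IsFullHeap A eps) {p : P} {a b : E} (hab : a < b)
    (ha : eps a = p) (hb : eps b = p) (h : ∀ c ∈ Set.Ioo a b, eps c ≠ p) :
    ∑ᶠ c ∈ Set.Ioo a b, A p (eps c) = -2 := by
  subst ha
  rw [← Finset.coe_Ioo, finsum_mem_coe_finset]
  exact hE.interval a b hab hb.symm fun c h1 h2 => h c ⟨h1, h2⟩

end IsFullHeap

structure IsFrontier {P E : Type*} [PartialOrder E] (eps : E → P) (F : Set E) (p : P)
    (a b : E) : Prop where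
  isIdeal : IsIdeal F
  left_mem : a ∈ F
  right_notMem : b ∉ F
  eps_left : eps a = p
  eps_right : eps b = p
  eps_ne_of_mem_Ioo : ∀ c ∈ Set.Ioo a b, eps c ≠ p

noncomputable def frontierWeight {P E : Type*} [PartialOrder E] (A : P → P → ℤ) (eps : E → P)
    (p : P) (F : Set E) (a b : E) : ℤ :=
  ∑ᶠ x ∈ Set.Ioo a b ∩ F, A p (eps x)

lemma IsFrontier.insert_of_eps_ne {P E : Type*} [PartialOrder E] {eps : E → P} {G : Set E}
    {p : P} {a b x : E} (h : IsFrontier eps G p a b) (hG : IsIdeal (insert x G))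
    (hx : eps x ≠ p) : IsFrontier eps (insert x G) p a b where
  isIdeal := hG
  left_mem := Or.inr h.left_mem
  right_notMem := by
    rintro (rfl | hb)
    exacts [hx h.eps_right, h.right_notMem hb]
  eps_left := h.eps_left
  eps_right := h.eps_right
  eps_ne_of_mem_Ioo := h.eps_ne_of_mem_Ioo

section Frontier

variable {P E : Type*} [PartialOrder E] [LocallyFiniteOrder E] {A : P → P → ℤ} {eps : E → P}
  {F F' G : Set E} {p : P} {a b a' b' x y : E}

namespace IsFrontier

lemma left_lt_of_notMem (hE : IsFullHeap A eps) (h : IsFrontier eps F p a b) (hy : y ∉ F)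
    (hyp : eps y = p ∨ Adj A p (eps y)) : a < y :=
  hE.lt_of_mem_of_notMem h.isIdeal h.left_mem hy (by rw [h.eps_left]; exact hyp.imp_left Eq.symm)

lemma lt_right_of_mem (hE : IsFullHeap A eps) (h : IsFrontier eps F p a b) (hy : y ∈ F)
    (hyp : eps y = p ∨ Adj A p (eps y)) : y < b := by
  rcases hE.comparable b y (by rw [h.eps_right]; exact hyp.imp_left Eq.symm) with hby | hyb
  · exact absurd (h.isIdeal hy hby) h.right_notMem
  · exact lt_of_le_of_ne hyb (by rintro rfl; exact h.right_notMem hy)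

lemma lt (hE : IsFullHeap A eps) (h : IsFrontier eps F p a b) : a < b :=
  h.left_lt_of_notMem hE h.right_notMem (Or.inl h.eps_right)

lemma le_left_of_mem (hE : IsFullHeap A eps) (h : IsFrontier eps F p a b) (hy : y ∈ F)
    (hyp : eps y = p) : y ≤ a := by
  rcases hE.comparable y a (by rw [hyp, h.eps_left]; exact Or.inl rfl) with hya | hay
  · exact hya
  rcases eq_or_lt_of_le hay with rfl | hay
  · exact le_rfl
  · exact absurd hyp (h.eps_ne_of_mem_Ioo y ⟨hay, h.lt_right_of_mem hE hy (Or.inl hyp)⟩)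

lemma right_le_of_notMem (hE : IsFullHeap A eps) (h : IsFrontier eps F p a b) (hy : y ∉ F)
    (hyp : eps y = p) : b ≤ y := by
  rcases hE.comparable b y (by rw [hyp, h.eps_right]; exact Or.inl rfl) with hby | hyb
  · exact hby
  rcases eq_or_lt_of_le hyb with rfl | hyb
  · exact le_rfl
  · exact absurd hyp (h.eps_ne_of_mem_Ioo y ⟨h.left_lt_of_notMem hE hy (Or.inl hyp), hyb⟩)

lemma unique (hE : IsFullHeap A eps) (h : IsFrontier eps F p a b)
    (h' : IsFrontier eps F p a' b') : a = a' ∧ b = b' :=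
  ⟨le_antisymm (h'.le_left_of_mem hE h.left_mem h.eps_left)
      (h.le_left_of_mem hE h'.left_mem h'.eps_left),
    le_antisymm (h.right_le_of_notMem hE h'.right_notMem h'.eps_right)
      (h'.right_le_of_notMem hE h.right_notMem h.eps_right)⟩

end IsFrontier

lemma IsFullHeap.exists_isFrontier (hE : IsFullHeap A eps) (hF : IsIdeal F)
    (hin : ∃ a ∈ F, eps a = p) (hout : ∃ c ∉ F, eps c = p) :
    ∃ a b, IsFrontier eps F p a b := by
  obtain ⟨a₀, ha₀F, ha₀p⟩ := hin
  obtain ⟨c, hcF, hcp⟩ := hout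
  have hS : (Set.Icc a₀ c ∩ F ∩ eps ⁻¹' {p}).Finite :=
    (Set.finite_Icc a₀ c).subset fun x hx => hx.1.1
  have ha₀c := hE.lt_of_mem_of_notMem hF ha₀F hcF (Or.inl (ha₀p.trans hcp.symm))
  obtain ⟨m, ⟨⟨⟨ha₀m, hmc⟩, hmF⟩, hmp⟩, hm_max⟩ :=
    hS.exists_maximal ⟨a₀, ⟨⟨le_rfl, ha₀c.le⟩, ha₀F⟩, ha₀p⟩
  have hmc' := hE.lt_of_mem_of_notMem hF hmF hcF (Or.inl (hmp.trans hcp.symm))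
  have hT : (Set.Ioc m c ∩ eps ⁻¹' {p}).Finite := (Set.finite_Ioc m c).subset fun x hx => hx.1
  obtain ⟨n, ⟨⟨hmn, hnc⟩, hnp⟩, hn_min⟩ := hT.exists_minimal ⟨c, ⟨hmc', le_rfl⟩, hcp⟩
  refine ⟨m, n, hF, hmF, fun hnF => ?_, hmp, hnp, fun z hz hzp => ?_⟩
  · exact hmn.not_ge (hm_max ⟨⟨⟨ha₀m.trans hmn.le, hnc⟩, hnF⟩, hnp⟩ hmn.le)
  · exact hz.2.not_ge (hn_min ⟨⟨hz.1, hz.2.le.trans hnc⟩, hzp⟩ hz.2.le)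

namespace IsProperIdeal

lemma exists_isFrontier (hE : IsFullHeap A eps) (hF : IsProperIdeal eps F) (p : P) :
    ∃ a b, IsFrontier eps F p a b :=
  let ⟨a, hap, haF⟩ := (hF.2 p).1
  let ⟨c, hcp, hcF⟩ := (hF.2 p).2
  hE.exists_isFrontier hF.1 ⟨a, haF, hap⟩ ⟨c, hcF, hcp⟩

lemma sdiff_finite [Finite P] (hE : IsFullHeap A eps) (hF : IsProperIdeal eps F)
    (hG : IsProperIdeal eps G) : (F \ G).Finite := by
  choose a b hab using hF.exists_isFrontier hE
  choose a' b' hab' using hG.exists_isFrontier hE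
  refine (Set.finite_iUnion fun q => Set.finite_Ioc (a' q) (a q)).subset fun x ⟨hxF, hxG⟩ =>
    Set.mem_iUnion.2 ⟨eps x, (hab' (eps x)).left_lt_of_notMem hE hxG (Or.inl rfl),
      (hab (eps x)).le_left_of_mem hE hxF rfl⟩

end IsProperIdeal

namespace IsFrontier

lemma frontierWeight_insert (hA : IsGCM A) (hE : IsFullHeap A eps) (h : IsFrontier eps G p a b)
    (h' : IsFrontier eps (insert x G) p a' b') (hx : x ∉ G) :
    frontierWeight A eps p (insert x G) a' b' = frontierWeight A eps p G a b + A p (eps x) := by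
  unfold frontierWeight
  by_cases hxp : eps x = p
  · -- adding `x` moves the frontier one step up the fibre: `x = b = a'`
    have hbx : b = x := by
      rcases h'.isIdeal (Set.mem_insert x G) (h.right_le_of_notMem hE hx hxp) with hb | hb
      exacts [hb, absurd hb h.right_notMem]
    subst hbx
    have ha' : a' = b := by
      refine le_antisymm ?_ (h'.le_left_of_mem hE (Set.mem_insert b G) hxp)
      rcases h'.left_mem with ha' | ha'
      exacts [ha'.le, (h.le_left_of_mem hE ha' h'.eps_left).trans (h.lt hE).le]
    subst ha'
    have hempty : Set.Ioo a' b' ∩ insert a' G = ∅ := by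
      refine Set.eq_empty_of_forall_notMem fun y ⟨hy, hyG⟩ => ?_
      rcases hyG with rfl | hyG
      exacts [lt_irrefl _ hy.1, h.right_notMem (h.isIdeal hyG hy.1.le)]
    have hfull : Set.Ioo a a' ∩ G = Set.Ioo a a' := by
      refine Set.inter_eq_left.2 fun y hy => ?_
      rcases h'.isIdeal (Set.mem_insert a' G) hy.2.le with rfl | hyG
      exacts [absurd hy.2 (lt_irrefl _), hyG]
    rw [hempty, hfull, finsum_mem_empty,
      hE.finsum_Ioo_eq_neg_two (h.lt hE) h.eps_left h.eps_right h.eps_ne_of_mem_Ioo, hxp, hA.1 p]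
    norm_num
  · obtain ⟨rfl, rfl⟩ := (h.insert_of_eps_ne h'.isIdeal hxp).unique hE h'
    by_cases hxI : x ∈ Set.Ioo a b
    · rw [Set.inter_insert_of_mem hxI, add_comm,
        finsum_mem_insert _ (fun hx' => hx hx'.2) ((Set.finite_Ioo a b).inter_of_left G)]
    · rw [Set.inter_insert_of_notMem hxI]
      suffices A p (eps x) = 0 by rw [this, add_zero]
      by_contra hAx
      have hadj : Adj A p (eps x) := ⟨Ne.symm hxp, hAx⟩
      exact hxI ⟨h.left_lt_of_notMem hE hx (Or.inr hadj),
        h'.lt_right_of_mem hE (Set.mem_insert x G) (Or.inr hadj)⟩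

lemma finsum_sdiff (hA : IsGCM A) (hE : IsFullHeap A eps) (hG : IsFrontier eps G p a b)
    (hF : IsFrontier eps F p a' b') (hGF : G ⊆ F) (hfin : (F \ G).Finite) :
    ∑ᶠ x ∈ F \ G, A p (eps x) = frontierWeight A eps p F a' b' - frontierWeight A eps p G a b := by
  obtain ⟨n, hn⟩ : ∃ n, (F \ G).ncard = n := ⟨_, rfl⟩
  induction n generalizing G a b with
  | zero =>
    obtain rfl : F = G := (Set.sdiff_eq_empty.1 ((Set.ncard_eq_zero hfin).1 hn)).antisymm hGF
    obtain ⟨rfl, rfl⟩ := hF.unique hE hG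
    simp
  | succ n ih =>
    -- adding a minimal element of `F \ G` to `G` keeps it an ideal
    obtain ⟨x, ⟨hxF, hxG⟩, hx_min⟩ :=
      hfin.exists_minimal (Set.nonempty_of_ncard_ne_zero (by omega))
    have hxG' : IsIdeal (insert x G) := by
      rintro z (rfl | hz) y hyz
      · by_contra hy
        exact hy (Or.inl (le_antisymm hyz
          (hx_min ⟨hF.isIdeal hxF hyz, fun hyG => hy (Or.inr hyG)⟩ hyz)))
      · exact Or.inr (hG.isIdeal hz hyz)
    have hsub : insert x G ⊆ F := Set.insert_subset hxF hGF
    obtain ⟨c, d, hG'⟩ := hE.exists_isFrontier hxG' ⟨a, Or.inr hG.left_mem, hG.eps_left⟩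
      ⟨b', fun hb' => hF.right_notMem (hsub hb'), hF.eps_right⟩
    have hsd : F \ G = insert x (F \ insert x G) := by
      rw [Set.insert_sdiff_insert, Set.insert_eq_of_mem (show x ∈ F \ G from ⟨hxF, hxG⟩)]
    have hxn : x ∉ F \ insert x G := fun hx => hx.2 (Set.mem_insert x G)
    have hfin' : (F \ insert x G).Finite := hfin.subset (by rw [hsd]; exact Set.subset_insert _ _)
    rw [hsd, Set.ncard_insert_of_notMem hxn hfin'] at hn
    rw [hsd, finsum_mem_insert _ hxn hfin', ih hG' hsub hfin' (by omega),
      hG.frontierWeight_insert hA hE hG' hxG]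
    ring

lemma sum_mul_chiFn [Fintype P] (hA : IsGCM A) (hE : IsFullHeap A eps)
    (hF : IsFrontier eps F p a b) (hF' : IsFrontier eps F' p a' b') (hfin : (F \ F').Finite)
    (hfin' : (F' \ F).Finite) :
    ∑ q, A p q * chiFn eps F F' q =
      frontierWeight A eps p F' a' b' - frontierWeight A eps p F a b := by
  have hI : IsIdeal (F ∩ F') := fun x hx y hy => ⟨hF.isIdeal hx.1 hy, hF'.isIdeal hx.2 hy⟩
  have hin : ∃ c ∈ F ∩ F', eps c = p := by
    rcases hE.comparable a a' (Or.inl (hF.eps_left.trans hF'.eps_left.symm)) with h | h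
    exacts [⟨a, ⟨hF.left_mem, hF'.isIdeal hF'.left_mem h⟩, hF.eps_left⟩,
      ⟨a', ⟨hF.isIdeal hF.left_mem h, hF'.left_mem⟩, hF'.eps_left⟩]
  obtain ⟨c, d, hI'⟩ :=
    hE.exists_isFrontier hI hin ⟨b, fun h => hF.right_notMem h.1, hF.eps_right⟩
  have e : F \ F' = F \ (F ∩ F') := Set.sdiff_self_inter.symm
  have e' : F' \ F = F' \ (F ∩ F') := Set.sdiff_inter_self_eq_sdiff.symm
  rw [sum_mul_chiFn_eq_finsum _ hfin hfin', e, e',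
    hI'.finsum_sdiff hA hE hF Set.inter_subset_left (e ▸ hfin),
    hI'.finsum_sdiff hA hE hF' Set.inter_subset_right (e' ▸ hfin')]
  ring

lemma exists_adj_mem_Ioo_inter (hE : IsFullHeap A eps) (h : IsFrontier eps F p a b)
    (hxF : x ∈ F) (hax : a < x) : ∃ y ∈ Set.Ioo a b ∩ F, Adj A p (eps y) := by
  obtain ⟨y, ⟨⟨hay, hyx⟩, hyF⟩, hy_min⟩ :=
    ((Set.finite_Ioc a x).inter_of_left F).exists_minimal ⟨x, ⟨hax, le_rfl⟩, hxF⟩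
  have hcov : a ⋖ y := ⟨hay, fun z haz hzy =>
    hzy.not_ge (hy_min ⟨⟨haz, hzy.le.trans hyx⟩, h.isIdeal hyF hzy.le⟩ hzy.le)⟩
  have hadj : Adj A p (eps y) := by
    rcases hE.eps_eq_or_adj_of_covBy hcov with hy | hy
    · exact absurd (h.le_left_of_mem hE hyF (hy.symm.trans h.eps_left)) hay.not_ge
    · rwa [h.eps_left] at hy
  exact ⟨y, ⟨⟨hay, h.lt_right_of_mem hE hyF (Or.inr hadj)⟩, hyF⟩, hadj⟩

lemma exists_adj_mem_Ioo_sdiff (hA : IsGCM A) (hE : IsFullHeap A eps)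
    (h : IsFrontier eps F p a b) (hxF : x ∉ F) (hxb : x < b) :
    ∃ y ∈ Set.Ioo a b \ F, Adj A p (eps y) := by
  obtain ⟨y, ⟨⟨hxy, hyb⟩, hyF⟩, hy_max⟩ :=
    (Set.finite_Ico x b).sdiff.exists_maximal ⟨x, ⟨le_rfl, hxb⟩, hxF⟩
  have hcov : y ⋖ b := ⟨hyb, fun z hyz hzb =>
    hyz.not_ge (hy_max ⟨⟨hxy.trans hyz.le, hzb⟩, fun hzF => hyF (h.isIdeal hzF hyz.le)⟩ hyz.le)⟩
  have hadj : Adj A p (eps y) := by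
    rcases hE.eps_eq_or_adj_of_covBy hcov with hy | hy
    · exact absurd (h.right_le_of_notMem hE hyF (hy.trans h.eps_right)) hyb.not_ge
    · rw [h.eps_right] at hy; exact hA.adj_symm hy
  exact ⟨y, ⟨⟨h.left_lt_of_notMem hE hyF (Or.inr hadj), hyb⟩, hyF⟩, hadj⟩

lemma eq_left_of_isIdeal_sdiff (hE : IsFullHeap A eps) (h : IsFrontier eps F p a b)
    (hxF : x ∈ F) (hxp : eps x = p) (hid : IsIdeal (F \ {x})) : x = a := by
  rcases eq_or_lt_of_le (h.le_left_of_mem hE hxF hxp) with hxa | hxa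
  exacts [hxa, absurd rfl (hid ⟨h.left_mem, hxa.ne'⟩ hxa.le).2]

lemma eq_right_of_isIdeal_union (hE : IsFullHeap A eps) (h : IsFrontier eps F p a b)
    (hxF : x ∉ F) (hxp : eps x = p) (hid : IsIdeal (F ∪ {x})) : x = b := by
  rcases hid (Or.inr rfl) (h.right_le_of_notMem hE hxF hxp) with hb | hb
  exacts [absurd hb h.right_notMem, hb.symm]

lemma isIdeal_sdiff_left_iff (hE : IsFullHeap A eps) (h : IsFrontier eps F p a b) :
    IsIdeal (F \ {a}) ↔ Set.Ioo a b ∩ F = ∅ := by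
  constructor
  · refine fun hid => Set.eq_empty_of_forall_notMem fun y ⟨hy, hyF⟩ => ?_
    exact (hid ⟨hyF, hy.1.ne'⟩ hy.1.le).2 rfl
  · rintro hempty x ⟨hxF, hxa⟩ y hyx
    refine ⟨h.isIdeal hxF hyx, ?_⟩
    rintro rfl
    obtain ⟨z, hz, -⟩ := h.exists_adj_mem_Ioo_inter hE hxF (lt_of_le_of_ne hyx (Ne.symm hxa))
    exact Set.eq_empty_iff_forall_notMem.1 hempty z hz

lemma isIdeal_union_right_iff (hA : IsGCM A) (hE : IsFullHeap A eps)
    (h : IsFrontier eps F p a b) : IsIdeal (F ∪ {b}) ↔ Set.Ioo a b ⊆ F := by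
  constructor
  · intro hid y hy
    rcases hid (Or.inr rfl) hy.2.le with hyF | hyb
    exacts [hyF, absurd hyb hy.2.ne]
  · rintro hsub x (hxF | rfl) y hyx
    · exact Or.inl (h.isIdeal hxF hyx)
    rcases eq_or_lt_of_le hyx with rfl | hyb
    · exact Or.inr rfl
    by_contra hy
    obtain ⟨z, ⟨hz, hzF⟩, -⟩ :=
      h.exists_adj_mem_Ioo_sdiff hA hE (fun hyF => hy (Or.inl hyF)) hyb
    exact hzF (hsub hz)

lemma frontierWeight_eq_neg_one (hA : IsGCM A) (hE : IsFullHeap A eps)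
    (h : IsFrontier eps F p a b) (hne : (Set.Ioo a b ∩ F).Nonempty)
    (hnsub : ¬ Set.Ioo a b ⊆ F) : frontierWeight A eps p F a b = -1 := by
  obtain ⟨x, hxI, hxF⟩ := hne
  obtain ⟨y, hy, hy_adj⟩ := h.exists_adj_mem_Ioo_inter hE hxF hxI.1
  obtain ⟨x', hx'I, hx'F⟩ := Set.not_subset.1 hnsub
  obtain ⟨y', hy', hy'_adj⟩ := h.exists_adj_mem_Ioo_sdiff hA hE hx'F hx'I.2
  -- the gap has total weight `-2`, all weights in it are `≤ 0`, and each of the two parts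
  -- contains an element of weight `≤ -1`
  have hle : ∀ {s}, s ⊆ Set.Ioo a b → ∀ z ∈ s, Adj A p (eps z) →
      ∑ᶠ w ∈ s, A p (eps w) ≤ -1 := fun {s} hs z hz hadj => by
    have hAz : A p (eps z) ≤ -1 := by
      have := hA.2.1 p (eps z) hadj.1; have := hadj.2; omega
    exact (finsum_mem_le_of_nonpos ((Set.finite_Ioo a b).subset hs)
      (fun w hw => hA.2.1 p _ (Ne.symm (h.eps_ne_of_mem_Ioo w (hs hw)))) hz).trans hAz
  have hsplit := finsum_mem_inter_add_sdiff (f := fun w => A p (eps w)) F (Set.finite_Ioo a b)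
  rw [hE.finsum_Ioo_eq_neg_two (h.lt hE) h.eps_left h.eps_right h.eps_ne_of_mem_Ioo] at hsplit
  have h1 := hle Set.inter_subset_left y hy hy_adj
  have h2 := hle Set.sdiff_subset y' hy' hy'_adj
  unfold frontierWeight
  omega

lemma chiFn_Sact [DecidableEq P] (hA : IsGCM A) (hE : IsFullHeap A eps)
    (h : IsFrontier eps F p a b) :
    chiFn eps F (Sact eps p F) = Pi.single p (-(frontierWeight A eps p F a b + 1)) := by
  unfold Sact
  split_ifs with hrem hadd
  · obtain ⟨hxF, hxp, hid⟩ := hrem.choose_spec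
    have hx := h.eq_left_of_isIdeal_sdiff hE hxF hxp hid
    rw [hx] at hid ⊢
    rw [chiFn_sdiff_singleton h.left_mem, h.eps_left, frontierWeight,
      (h.isIdeal_sdiff_left_iff hE).1 hid, finsum_mem_empty]
    simp [Pi.single_neg]
  · obtain ⟨hxF, hxp, hid⟩ := hadd.choose_spec
    have hx := h.eq_right_of_isIdeal_union hE hxF hxp hid
    rw [hx] at hid ⊢
    rw [Set.union_singleton, chiFn_insert h.right_notMem, h.eps_right, frontierWeight,
      Set.inter_eq_left.2 ((h.isIdeal_union_right_iff hA hE).1 hid),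
      hE.finsum_Ioo_eq_neg_two (h.lt hE) h.eps_left h.eps_right h.eps_ne_of_mem_Ioo]
    norm_num
  · have hne : (Set.Ioo a b ∩ F).Nonempty := Set.nonempty_iff_ne_empty.2 fun he =>
      hrem ⟨a, h.left_mem, h.eps_left, (h.isIdeal_sdiff_left_iff hE).2 he⟩
    have hnsub : ¬ Set.Ioo a b ⊆ F := fun hs =>
      hadd ⟨b, h.right_notMem, h.eps_right, (h.isIdeal_union_right_iff hA hE).2 hs⟩
    rw [h.frontierWeight_eq_neg_one hA hE hne hnsub, chiFn_self]
    simp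

end IsFrontier

lemma chiFn_Sact_Sact [Fintype P] [DecidableEq P] (hA : IsGCM A) (hE : IsFullHeap A eps)
    (p : P) (hF : IsProperIdeal eps F) (hF' : IsProperIdeal eps F')
    (hSF : IsProperIdeal eps (Sact eps p F)) (hSF' : IsProperIdeal eps (Sact eps p F')) :
    chiFn eps (Sact eps p F) (Sact eps p F') = reflAct A p (chiFn eps F F') := by
  obtain ⟨a, b, h⟩ := hF.exists_isFrontier hE p
  obtain ⟨a', b', h'⟩ := hF'.exists_isFrontier hE p
  have fin : ∀ {G H : Set E}, IsProperIdeal eps G → IsProperIdeal eps H → (G \ H).Finite :=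
    fun hG hH => hG.sdiff_finite hE hH
  -- `χ(s_p F, s_p F') = χ(s_p F, F) + χ(F, F') + χ(F', s_p F')`
  rw [← chiFn_add_chiFn (fin hSF hF) (fin hF hSF) (fin hF hSF') (fin hSF' hF),
    ← chiFn_add_chiFn (fin hF hF') (fin hF' hF) (fin hF' hSF') (fin hSF' hF'),
    chiFn_swap, h.chiFn_Sact hA hE, h'.chiFn_Sact hA hE, reflAct_eq_sub_single,
    h.sum_mul_chiFn hA hE h' (fin hF hF') (fin hF' hF)]
  funext r
  by_cases hr : r = p
  · subst hr; simp; ring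
  · simp [hr]

end Frontier

theorem stmt6_general {P E : Type*} [Fintype P] [DecidableEq P] [PartialOrder E]
    [LocallyFiniteOrder E] {A : P → P → ℤ} {eps : E → P}
    (hA : IsGCM A) (hE : IsFullHeap A eps)
    (act : WeylGroup A →* Equiv.Perm {I : Set E // IsProperIdeal eps I})
    (hact : ∀ (p : P) (I : {I : Set E // IsProperIdeal eps I}),
      (act (PresentedGroup.of p) I).val = Sact eps p I.val)
    (ρ : WeylGroup A →* Equiv.Perm (P → ℤ))
    (hρ : ∀ (p : P) (v : P → ℤ), ρ (PresentedGroup.of p) v = reflAct A p v) :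
    ∀ (w : WeylGroup A) (F F' : {I : Set E // IsProperIdeal eps I}),
      ((∃ (u : WeylGroup A) (p : P), ρ u (Pi.single p 1) = chiFn eps F.val F'.val) ↔
       (∃ (u : WeylGroup A) (p : P),
          ρ u (Pi.single p 1) = chiFn eps (act w F).val (act w F').val)) := by
  have hequiv := PresentedGroup.equivariant_of_forall_of act ρ (fun F F' => chiFn eps F.val F'.val)
    fun p F F' => by
      have hSF := (act (PresentedGroup.of p) F).2
      have hSF' := (act (PresentedGroup.of p) F').2
      rw [hact] at hSF hSF' ⊢
      rw [hact, hρ]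
      exact chiFn_Sact_Sact hA hE p F.2 F'.2 hSF hSF'
  intro w F F'
  rw [hequiv]
  exact (exists_map_apply_eq_map_apply_iff ρ (fun p => Pi.single p 1) w _).symm

/-- For an affine `A`, the relation of skewness (the
character being a real root) on pairs of proper ideals is invariant under the
action of the Weyl group. -/
theorem stmt6 {P E : Type*} [Fintype P] [DecidableEq P] [PartialOrder E]
    [LocallyFiniteOrder E] {A : P → P → ℤ} {eps : E → P}
    (hA : IsGCM A) (haff : IsAffine A) (hE : IsFullHeap A eps)
    (act : WeylGroup A →* Equiv.Perm {I : Set E // IsProperIdeal eps I})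
    (hact : ∀ (p : P) (I : {I : Set E // IsProperIdeal eps I}),
      (act (PresentedGroup.of p) I).val = Sact eps p I.val)
    (ρ : WeylGroup A →* Equiv.Perm (P → ℤ))
    (hρ : ∀ (p : P) (v : P → ℤ), ρ (PresentedGroup.of p) v = reflAct A p v) :
    ∀ (w : WeylGroup A) (F F' : {I : Set E // IsProperIdeal eps I}),
      ((∃ (u : WeylGroup A) (p : P), ρ u (Pi.single p 1) = chiFn eps F.val F'.val) ↔
       (∃ (u : WeylGroup A) (p : P),
          ρ u (Pi.single p 1) = chiFn eps (act w F).val (act w F').val)) :=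
  stmt6_general hA hE act hact ρ hρ
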